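/- Let c₁, c₂ be real constants with c₃ = c₁ + c₂·α > 0, where α = lim_{r→∞} F(r), and set Ĝ = c₁·G₁ + c₂·G₂. Then there exists B > A such that for all r ≥ B, Ĝ(r) > 0 and Ĝ'(r)/Ĝ(r) > (3/4)·(1/r)·(1 + (1/2+ε)/(log r)). -/

import Mathlib

open Real Filter Set Topology intervalIntegral

/-!
Write `Ĝ = H · G₁` with `H = c₁ + c₂ F`. Then `Ĝ'/Ĝ = H'/H + G₁'/G₁`, where
`G₁'/G₁ = (1/r)(1 + (1/2+ε)/log r)` exactly and `H'/H = c₂ F'/H`. Since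
`F'(r) = 1/(r² (log r)^{1+2ε}) = o(1/r)` and `H → c₃ > 0`, the term `r H'/H` tends to `0`,
so eventually `H'/H > -1/(4r)`, which costs at most a quarter of `G₁'/G₁`.
-/

theorem hasDerivAt_integral_of_continuousOn {f : ℝ → ℝ} {U : Set ℝ} {a b : ℝ}
    (hU : IsOpen U) (hf : ContinuousOn f U) (hab : uIcc a b ⊆ U) :
    HasDerivAt (fun u => ∫ s in a..u, f s) (f b) b :=
  integral_hasDerivAt_right (hf.mono hab).intervalIntegrable
    (hf.stronglyMeasurableAtFilter hU b (hab right_mem_uIcc))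
    (hf.continuousAt (hU.mem_nhds (hab right_mem_uIcc)))

theorem continuousOn_one_div_sq_mul_log_rpow (q : ℝ) :
    ContinuousOn (fun s : ℝ => 1 / (s ^ 2 * log s ^ q)) (Ioi 1) := by
  intro s hs
  rw [mem_Ioi] at hs
  have hlog : 0 < log s := log_pos hs
  refine (continuousAt_const.div ?_ (by positivity)).continuousWithinAt
  exact (continuousAt_id.pow 2).mul
    ((continuousAt_log (by positivity)).rpow_const (Or.inl hlog.ne'))

theorem hasDerivAt_integral_one_div_sq_mul_log_rpow (q : ℝ) {a r : ℝ} (ha : 1 < a) (hr : 1 < r) :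
    HasDerivAt (fun u => ∫ s in a..u, 1 / (s ^ 2 * log s ^ q)) (1 / (r ^ 2 * log r ^ q)) r :=
  hasDerivAt_integral_of_continuousOn isOpen_Ioi (continuousOn_one_div_sq_mul_log_rpow q)
    fun _ hs => (lt_min ha hr).trans_le hs.1

theorem tendsto_mul_one_div_sq_mul_log_rpow_atTop {q : ℝ} (hq : 0 ≤ q) :
    Tendsto (fun r : ℝ => r * (1 / (r ^ 2 * log r ^ q))) atTop (𝓝 0) := by
  refine squeeze_zero' ?_ ?_ tendsto_inv_atTop_zero
  · filter_upwards [eventually_gt_atTop 1] with r hr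
    have := log_pos hr
    positivity
  · filter_upwards [eventually_ge_atTop (exp 1)] with r hr
    have hr0 : 0 < r := (exp_pos 1).trans_le hr
    have hlog : 1 ≤ log r ^ q := one_le_rpow ((le_log_iff_exp_le hr0).2 hr) hq
    calc r * (1 / (r ^ 2 * log r ^ q)) = r⁻¹ / log r ^ q := by field_simp
      _ ≤ r⁻¹ := div_le_self (by positivity) hlog

theorem hasDerivAt_mul_log_rpow (p : ℝ) {r : ℝ} (hr : 1 < r) :
    HasDerivAt (fun x => x * log x ^ p) (log r ^ p + p * log r ^ (p - 1)) r := by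
  refine ((hasDerivAt_id' r).fun_mul
    ((hasDerivAt_log (by linarith)).rpow_const (Or.inl (log_pos hr).ne'))).congr_deriv ?_
  field_simp

theorem logDeriv_mul_log_rpow (p : ℝ) {r : ℝ} (hr : 1 < r) :
    logDeriv (fun x => x * log x ^ p) r = 1 / r * (1 + p / log r) := by
  have hlog : 0 < log r := log_pos hr
  rw [logDeriv_apply, (hasDerivAt_mul_log_rpow p hr).deriv, rpow_sub_one hlog.ne']
  field_simp

theorem stmt_10_general (ε A : ℝ) (hε : 0 < ε) (hA : 1 < A)
    (G₁ : ℝ → ℝ) (hG₁ : ∀ r : ℝ, G₁ r = r * Real.log r ^ (1 / 2 + ε))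
    (F : ℝ → ℝ)
    (hF : ∀ r : ℝ, A ≤ r → F r = ∫ s in A..r, 1 / (s ^ 2 * Real.log s ^ (1 + 2 * ε)))
    (G₂ : ℝ → ℝ) (hG₂ : ∀ r : ℝ, G₂ r = F r * G₁ r)
    (α : ℝ) (hαlim : Tendsto F atTop (nhds α))
    (c₁ c₂ : ℝ) (hc₃ : 0 < c₁ + c₂ * α)
    (Ghat : ℝ → ℝ) (hGhat : ∀ r : ℝ, Ghat r = c₁ * G₁ r + c₂ * G₂ r) :
    ∃ B : ℝ, A < B ∧ ∀ r : ℝ, B ≤ r →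
      0 < Ghat r ∧
        deriv Ghat r / Ghat r
          > 3 / 4 * (1 / r) * (1 + (1 / 2 + ε) / Real.log r) := by
  set p := 1 / 2 + ε
  set f : ℝ → ℝ := fun s => 1 / (s ^ 2 * log s ^ (1 + 2 * ε))
  set H : ℝ → ℝ := fun r => c₁ + c₂ * F r
  have hGhat_eq : Ghat = fun r => H r * (r * log r ^ p) := by
    ext r
    simp only [H, hGhat, hG₂, hG₁]
    ring
  have hH_deriv (r : ℝ) (hr : A < r) : HasDerivAt H (c₂ * f r) r :=
    ((hasDerivAt_integral_one_div_sq_mul_log_rpow _ hA (hA.trans hr)).congr_of_eventuallyEq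
      (by filter_upwards [eventually_gt_nhds hr] with x hx using hF x hx.le)).const_mul c₂
      |>.const_add c₁
  have hH : Tendsto H atTop (𝓝 (c₁ + c₂ * α)) := tendsto_const_nhds.add (hαlim.const_mul c₂)
  have hr_logDeriv_H : Tendsto (fun r => c₂ * (r * f r) / H r) atTop (𝓝 0) := by
    have := ((tendsto_mul_one_div_sq_mul_log_rpow_atTop (q := 1 + 2 * ε) (by positivity)).const_mul
      c₂).div hH hc₃.ne'
    rwa [mul_zero, zero_div] at this
  obtain ⟨B, hB⟩ := eventually_atTop.1 <| (hH.eventually (eventually_gt_nhds hc₃)).and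
    (hr_logDeriv_H.eventually (eventually_gt_nhds (by norm_num : (-1 / 4 : ℝ) < 0)))
  refine ⟨max B (A + 1), by simp, fun r hr => ?_⟩
  obtain ⟨hHr, hr_logDeriv_H_r⟩ := hB r (le_of_max_le_left hr)
  have hAr : A < r := by linarith [le_of_max_le_right hr]
  have h1r : 1 < r := hA.trans hAr
  have hlog : 0 < log r := log_pos h1r
  have hG₁r : 0 < r * log r ^ p := by positivity
  refine ⟨by rw [hGhat_eq]; exact mul_pos hHr hG₁r, ?_⟩
  rw [← logDeriv_apply, hGhat_eq, logDeriv_mul r hHr.ne' hG₁r.ne'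
    (hH_deriv r hAr).differentiableAt (hasDerivAt_mul_log_rpow p h1r).differentiableAt,
    logDeriv_mul_log_rpow p h1r, logDeriv_apply, (hH_deriv r hAr).deriv]
  have hlogDeriv_H : -(1 / 4) * (1 / r) < c₂ * f r / H r := by
    rw [show c₂ * (r * f r) / H r = r * (c₂ * f r / H r) by ring] at hr_logDeriv_H_r
    rw [mul_one_div, div_lt_iff₀ (by linarith)]
    linarith
  have : 0 ≤ 1 / r * (p / log r) := by positivity
  linarith

/-- Let `c₃ = c₁ + c₂ α > 0`, where `α = lim_{r→∞} F r`, and set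
`Ĝ = c₁ G₁ + c₂ G₂`. Then there exists `B > A` such that for all `r ≥ B`,
`Ĝ r > 0` and `Ĝ' r / Ĝ r > (3/4) (1/r) (1 + (1/2+ε)/log r)`. -/
theorem stmt_10 (ε A : ℝ) (hε : 0 < ε) (hA : 1 < A)
    (G₁ : ℝ → ℝ) (hG₁ : ∀ r : ℝ, G₁ r = r * Real.log r ^ (1 / 2 + ε))
    (F : ℝ → ℝ)
    (hF : ∀ r : ℝ, A ≤ r → F r = ∫ s in A..r, 1 / (s ^ 2 * Real.log s ^ (1 + 2 * ε)))
    (G₂ : ℝ → ℝ) (hG₂ : ∀ r : ℝ, G₂ r = F r * G₁ r)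
    (α : ℝ) (hα : 0 < α) (hαlim : Tendsto F atTop (nhds α))
    (c₁ c₂ : ℝ) (hc₃ : 0 < c₁ + c₂ * α)
    (Ghat : ℝ → ℝ) (hGhat : ∀ r : ℝ, Ghat r = c₁ * G₁ r + c₂ * G₂ r) :
    ∃ B : ℝ, A < B ∧ ∀ r : ℝ, B ≤ r →
      0 < Ghat r ∧
        deriv Ghat r / Ghat r
          > 3 / 4 * (1 / r) * (1 + (1 / 2 + ε) / Real.log r) :=
  stmt_10_general ε A hε hA G₁ hG₁ F hF G₂ hG₂ α hαlim c₁ c₂ hc₃ Ghat hGhat
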